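/- Let G be a composite graph formed from disjoint connected subgraphs G_1,...,G_n joined through bridge nodes l_1,...,l_n via a connected backbone graph B. Then the network coherence of G satisfies H_C(G) = (1/(2N)) [ Σ_{i=1}^n 2 n_i H_C(G_i) + Σ_{i=1}^n Σ_{j=i+1}^n n_i n_j r(l_i, l_j) + Σ_{i=1}^n (N − n_i) C_i(l_i) ], where r(l_i,l_j) is the resistance distance between l_i and l_j in G. -/

import Mathlib

open scoped Classical
open Matrix

noncomputable section

/-- The four Moore–Penrose conditions for `B` to be the pseudoinverse of `A`. -/
def IsMoorePenroseInv {α : Type*} [Fintype α] (A B : Matrix α α ℝ) : Prop :=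
  A * B * A = A ∧ B * A * B = B ∧ (A * B)ᵀ = A * B ∧ (B * A)ᵀ = B * A

/-- The Moore–Penrose pseudoinverse of a real square matrix (it exists and is
unique; we extract it by choice). -/
noncomputable def pinv {α : Type*} [Fintype α] (A : Matrix α α ℝ) : Matrix α α ℝ :=
  if h : ∃ B, IsMoorePenroseInv A B then h.choose else 0

/-- The (real) Laplacian matrix of a simple graph. -/
noncomputable def lap {α : Type*} [Fintype α] (H : SimpleGraph α) : Matrix α α ℝ :=
  letI := Classical.decEq α
  letI : DecidableRel H.Adj := Classical.decRel _
  H.lapMatrix ℝ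

/-- The standard basis (indicator) vector `e_u`. -/
noncomputable def evec {α : Type*} [Fintype α] (u : α) : α → ℝ :=
  fun w => if w = u then 1 else 0

/-- Resistance distance `r(u,v) = (e_u - e_v)ᵀ L† (e_u - e_v)`. -/
noncomputable def resistance {α : Type*} [Fintype α] (H : SimpleGraph α) (u v : α) : ℝ :=
  (evec u - evec v) ⬝ᵥ (pinv (lap H)).mulVec (evec u - evec v)

/-- Effective resistance `Ω_H = Σ_{u<v} r(u,v) = (1/2) Σ_{u,v} r(u,v)`. -/
noncomputable def effRes {α : Type*} [Fintype α] (H : SimpleGraph α) : ℝ :=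
  (1 / 2) * ∑ u : α, ∑ v : α, resistance H u v

/-- Network coherence `H_C(H) = Ω_H / (2 |V_H|)`. -/
noncomputable def coherence {α : Type*} [Fintype α] (H : SimpleGraph α) : ℝ :=
  effRes H / (2 * Fintype.card α)

/-- Resistance centrality `C(v) = Σ_{u ≠ v} r(u,v)`. -/
noncomputable def rcentrality {α : Type*} [Fintype α] (H : SimpleGraph α) (v : α) : ℝ :=
  ∑ u ∈ Finset.univ.filter (· ≠ v), resistance H u v

/-- The composite graph built from disjoint subgraphs `G i` with bridge nodes `l i`,
connected according to the backbone graph `B` on the indices. -/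
def composite {n : ℕ} (V : Fin n → Type*) (G : ∀ i, SimpleGraph (V i))
    (l : ∀ i, V i) (B : SimpleGraph (Fin n)) : SimpleGraph (Σ i, V i) where
  Adj x y := (∃ h : x.1 = y.1, (G y.1).Adj (h ▸ x.2) y.2) ∨
    (B.Adj x.1 y.1 ∧ x.2 = l x.1 ∧ y.2 = l y.1)
  symm := by
    constructor
    rintro ⟨i, u⟩ ⟨j, v⟩ (⟨h, hadj⟩ | ⟨hB, hu, hv⟩)
    · dsimp only at h
      subst h
      exact Or.inl ⟨rfl, hadj.symm⟩
    · exact Or.inr ⟨hB.symm, hv, hu⟩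
  loopless := by
    constructor
    rintro ⟨i, u⟩ (⟨h, hadj⟩ | ⟨hB, _, _⟩)
    · exact (G i).loopless.irrefl _ hadj
    · exact B.loopless.irrefl _ hB

section MoorePenrose

variable {α : Type*} [Fintype α]

lemma exists_moorePenrose [DecidableEq α] {A : Matrix α α ℝ}
    (hA : A.IsHermitian) : ∃ B, IsMoorePenroseInv A B := by
  classical
  set U : Matrix α α ℝ := (hA.eigenvectorUnitary : Matrix α α ℝ) with hU
  have hUU' : star U * U = 1 := Matrix.mem_unitaryGroup_iff'.mp hA.eigenvectorUnitary.2
  set e : α → ℝ := hA.eigenvalues with he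
  have hspec : A = U * Matrix.diagonal e * star U := by
    have h := hA.spectral_theorem
    have h4 : (RCLike.ofReal ∘ hA.eigenvalues : α → ℝ) = hA.eigenvalues := by
      funext i; simp
    rwa [h4] at h
  set p : α → ℝ := fun i => if e i = 0 then 0 else (e i)⁻¹ with hp
  have key : ∀ a b : α → ℝ,
      (U * Matrix.diagonal a * star U) * (U * Matrix.diagonal b * star U)
        = U * Matrix.diagonal (fun i => a i * b i) * star U := by
    intro a b
    simp only [Matrix.mul_assoc]
    rw [← Matrix.mul_assoc (star U) U, hUU', Matrix.one_mul,
      ← Matrix.mul_assoc (Matrix.diagonal a), Matrix.diagonal_mul_diagonal]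
  have hstar : ∀ a : α → ℝ,
      (U * Matrix.diagonal a * star U)ᵀ = U * Matrix.diagonal a * star U := by
    intro a
    rw [← Matrix.conjTranspose_eq_transpose_of_trivial]
    simp [Matrix.conjTranspose_mul, Matrix.diagonal_conjTranspose,
      Matrix.star_eq_conjTranspose, Matrix.conjTranspose_conjTranspose, Matrix.mul_assoc]
  refine ⟨U * Matrix.diagonal p * star U, ?_, ?_, ?_, ?_⟩
  · rw [hspec, key, key]
    have harg : (fun i => (fun i => e i * p i) i * e i) = e := by
      funext i
      show e i * p i * e i = e i
      by_cases h : e i = 0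
      · simp [hp, h]
      · field_simp [hp, h]
        simp [hp, h]
    rw [harg]
  · rw [hspec, key, key]
    have harg : (fun i => (fun i => p i * e i) i * p i) = p := by
      funext i
      show p i * e i * p i = p i
      by_cases h : e i = 0
      · simp [hp, h]
      · field_simp [hp, h]
        simp [hp, h]
    rw [harg]
  · rw [hspec, key]; exact hstar _
  · rw [hspec, key]; exact hstar _

lemma pinv_isMP [DecidableEq α] {A : Matrix α α ℝ} (hA : A.IsHermitian) :
    IsMoorePenroseInv A (pinv A) := by
  have h : ∃ B, IsMoorePenroseInv A B := exists_moorePenrose hA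
  rw [pinv, dif_pos h]
  exact h.choose_spec

end MoorePenrose

section LapBasics

variable {α : Type*} [Fintype α]

lemma lap_eq [inst1 : DecidableEq α] (H : SimpleGraph α) [inst2 : DecidableRel H.Adj] :
    lap H = H.lapMatrix ℝ := by
  unfold lap
  congr!

lemma lap_isHermitian (H : SimpleGraph α) : (lap H).IsHermitian := by
  classical
  rw [lap_eq H, Matrix.IsHermitian, Matrix.conjTranspose_eq_transpose_of_trivial]
  exact H.isSymm_lapMatrix ℝ

lemma lap_mulVec (H : SimpleGraph α) (f : α → ℝ) (x : α) :
    (lap H *ᵥ f) x = ∑ y, if H.Adj x y then f x - f y else 0 := by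
  classical
  rw [lap_eq H, SimpleGraph.lapMatrix_mulVec_apply, SimpleGraph.degree_eq_sum_if_adj,
    SimpleGraph.neighborFinset_eq_filter, Finset.sum_filter, Finset.sum_mul,
    ← Finset.sum_sub_distrib]
  congr 1
  funext y
  by_cases h : H.Adj x y <;> simp [h]

lemma dot_evec_sub (f : α → ℝ) (u v : α) :
    f ⬝ᵥ (evec u - evec v) = f u - f v := by
  classical
  simp only [dotProduct, evec, Pi.sub_apply, mul_sub, mul_ite, mul_one, mul_zero,
    Finset.sum_sub_distrib, Finset.sum_ite_eq', Finset.mem_univ, if_pos]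

lemma resistance_eq_of_potential (H : SimpleGraph α) {u v : α} {f : α → ℝ}
    (hf : lap H *ᵥ f = evec u - evec v) :
    resistance H u v = f u - f v := by
  classical
  obtain ⟨h1, h2, h3, h4⟩ := pinv_isMP (lap_isHermitian H)
  set A := lap H with hA
  set Bm := pinv (lap H) with hBm
  have hAT : Aᵀ = A := by
    rw [← Matrix.conjTranspose_eq_transpose_of_trivial]
    exact lap_isHermitian H
  rw [resistance, ← hf]
  calc (A *ᵥ f) ⬝ᵥ (Bm *ᵥ (A *ᵥ f))
      = (f ᵥ* Aᵀ) ⬝ᵥ (Bm *ᵥ (A *ᵥ f)) := by rw [Matrix.vecMul_transpose]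
    _ = f ⬝ᵥ (Aᵀ *ᵥ (Bm *ᵥ (A *ᵥ f))) := (Matrix.dotProduct_mulVec _ _ _).symm
    _ = f ⬝ᵥ ((Aᵀ * Bm * A) *ᵥ f) := by rw [Matrix.mulVec_mulVec, Matrix.mulVec_mulVec]
    _ = f ⬝ᵥ (A *ᵥ f) := by rw [hAT, h1]
    _ = f u - f v := by rw [hf]; exact dot_evec_sub f u v

lemma sum_evec_sub (u v : α) : ∑ w, (evec u - evec v : α → ℝ) w = 0 := by
  classical
  simp [evec, Finset.sum_sub_distrib, Finset.sum_ite_eq', Finset.mem_univ]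

lemma exists_potential (H : SimpleGraph α) (hH : H.Connected) (u v : α) :
    ∃ f, lap H *ᵥ f = evec u - evec v := by
  classical
  obtain ⟨h1, h2, h3, h4⟩ := pinv_isMP (lap_isHermitian H)
  set A := lap H with hA
  set Bm := pinv (lap H) with hBm
  have hAT : Aᵀ = A := by
    rw [← Matrix.conjTranspose_eq_transpose_of_trivial]
    exact lap_isHermitian H
  set x : α → ℝ := evec u - evec v with hx
  refine ⟨Bm *ᵥ x, ?_⟩
  set k : α → ℝ := A *ᵥ (Bm *ᵥ x) - x with hk
  have hA1 : A *ᵥ (fun _ => (1 : ℝ)) = 0 := by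
    rw [hA, lap_eq H]
    exact H.lapMatrix_mulVec_const_eq_zero
  have hAB1 : (A * Bm) *ᵥ (fun _ => (1 : ℝ)) = 0 := by
    calc (A * Bm) *ᵥ (fun _ => (1 : ℝ)) = (A * Bm)ᵀ *ᵥ (fun _ => (1 : ℝ)) := by rw [h3]
      _ = (Bmᵀ * Aᵀ) *ᵥ (fun _ => (1 : ℝ)) := by rw [Matrix.transpose_mul]
      _ = Bmᵀ *ᵥ (A *ᵥ (fun _ => (1 : ℝ))) := by rw [hAT, ← Matrix.mulVec_mulVec]
      _ = 0 := by rw [hA1, Matrix.mulVec_zero]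
  have hAAB : A * A * Bm = A := by
    have e0 := congrArg Matrix.transpose h1
    rw [Matrix.transpose_mul, Matrix.transpose_mul, hAT, ← Matrix.mul_assoc] at e0
    -- e0 : A * Bmᵀ * A = A  (since (A*Bm*A)ᵀ = Aᵀ*(Bmᵀ*Aᵀ) = A * Bmᵀ * A)
    calc A * A * Bm = A * (A * Bm)ᵀ := by rw [Matrix.mul_assoc, h3]
      _ = A * (Bmᵀ * Aᵀ) := by rw [Matrix.transpose_mul]
      _ = A * Bmᵀ * A := by rw [hAT, Matrix.mul_assoc]
      _ = A := e0
  have hAk : A *ᵥ k = 0 := by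
    have hstep : A *ᵥ (A *ᵥ (Bm *ᵥ x)) = A *ᵥ x := by
      rw [Matrix.mulVec_mulVec, Matrix.mulVec_mulVec, hAAB]
    rw [hk, Matrix.mulVec_sub, hstep, sub_self]
  have hconst : ∀ i j : α, H.Reachable i j → k i = k j := by
    have h7 : Matrix.toLin' (H.lapMatrix ℝ) k = 0 := by
      rw [Matrix.toLin'_apply, ← lap_eq H, ← hA, hAk]
    exact (H.lapMatrix_mulVec_eq_zero_iff_forall_reachable).mp (by rwa [Matrix.toLin'_apply] at h7)
  have hsumABx : ∑ w, ((A * Bm) *ᵥ x) w = 0 := by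
    have hd : (fun _ => (1 : ℝ)) ⬝ᵥ ((A * Bm) *ᵥ x) = 0 := by
      rw [Matrix.dotProduct_mulVec, ← Matrix.mulVec_transpose, h3, hAB1,
        zero_dotProduct]
    simpa [dotProduct] using hd
  have hsumk : ∑ w, k w = 0 := by
    have : ∑ w, k w = ∑ w, ((A * Bm) *ᵥ x) w - ∑ w, x w := by
      rw [← Finset.sum_sub_distrib]
      refine Finset.sum_congr rfl fun w _ => ?_
      rw [hk]
      simp [Matrix.mulVec_mulVec]
    rw [this, hsumABx, hx, sum_evec_sub, sub_zero]
  have hk0 : k = 0 := by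
    have hne : Nonempty α := hH.nonempty
    funext w
    have hc : ∑ w', k w' = (Fintype.card α : ℝ) * k w := by
      rw [Finset.sum_congr rfl fun w' _ => hconst w' w (hH.preconnected w' w)]
      simp [Finset.sum_const, Finset.card_univ, mul_comm]
    have hcard : (0 : ℝ) < (Fintype.card α : ℝ) := by
      exact_mod_cast Fintype.card_pos_iff.mpr hne
    have := hc.symm.trans hsumk
    rcases mul_eq_zero.mp this with h | h
    · exact absurd h (ne_of_gt hcard)
    · simpa using h
  have := sub_eq_zero.mp (hk ▸ hk0 : A *ᵥ (Bm *ᵥ x) - x = 0)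
  rw [hA] at this
  exact this

lemma resistance_self (H : SimpleGraph α) (u : α) : resistance H u u = 0 := by
  simp [resistance]

lemma resistance_comm (H : SimpleGraph α) (u v : α) :
    resistance H u v = resistance H v u := by
  have h : (evec v - evec u : α → ℝ) = -(evec u - evec v) := by ring
  rw [resistance, resistance, h, Matrix.mulVec_neg]
  simp [dotProduct_neg, neg_dotProduct]

end LapBasics
section Composite

variable {n : ℕ} {V : Fin n → Type*} [∀ i, Fintype (V i)]
  {G : ∀ i, SimpleGraph (V i)} {l : ∀ i, V i} {B : SimpleGraph (Fin n)}

/-- Extension of a potential on `V i` to the composite vertex set, constant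
`f (l i)` outside block `i`. -/
def extF (l : ∀ i, V i) (i : Fin n) (f : V i → ℝ) : (Σ k, V k) → ℝ :=
  fun x => if h : x.1 = i then f (h ▸ x.2) else f (l i)

lemma extF_mk_self (i : Fin n) (f : V i → ℝ) (w : V i) :
    extF l i f ⟨i, w⟩ = f w := by
  show dite _ _ _ = f w
  rw [dif_pos rfl]

lemma extF_mk_ne {i k : Fin n} (h : k ≠ i) (f : V i → ℝ) (w : V k) :
    extF l i f ⟨k, w⟩ = f (l i) := by
  show dite _ _ _ = f (l i)
  rw [dif_neg h]

lemma extF_bridge (i m : Fin n) (f : V i → ℝ) :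
    extF l i f ⟨m, l m⟩ = f (l i) := by
  by_cases h : m = i
  · subst h
    exact extF_mk_self m f (l m)
  · exact extF_mk_ne h f (l m)

lemma comp_adj_same {k : Fin n} {w z : V k} :
    (composite V G l B).Adj ⟨k, w⟩ ⟨k, z⟩ ↔ (G k).Adj w z := by
  constructor
  · rintro (⟨h, ha⟩ | ⟨hB', -, -⟩)
    · exact ha
    · exact absurd hB' (B.loopless.irrefl k)
  · intro ha
    exact Or.inl ⟨rfl, ha⟩

lemma comp_adj_ne {k m : Fin n} (hkm : k ≠ m) {w : V k} {z : V m} :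
    (composite V G l B).Adj ⟨k, w⟩ ⟨m, z⟩ ↔ (B.Adj k m ∧ w = l k ∧ z = l m) := by
  constructor
  · rintro (⟨h, ha⟩ | hq)
    · exact absurd h hkm
    · exact hq
  · intro hq
    exact Or.inr hq

lemma lap_comp_apply (F : (Σ k, V k) → ℝ) (k : Fin n) (w : V k) :
    (lap (composite V G l B) *ᵥ F) ⟨k, w⟩ =
      (∑ z : V k, if (G k).Adj w z then F ⟨k, w⟩ - F ⟨k, z⟩ else 0)
      + (if w = l k then ∑ m, if B.Adj k m then F ⟨k, w⟩ - F ⟨m, l m⟩ else 0 else 0) := by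
  classical
  rw [lap_mulVec, ← Finset.univ_sigma_univ, Finset.sum_sigma]
  rw [← Finset.add_sum_erase _ _ (Finset.mem_univ k)]
  congr 1
  · refine Finset.sum_congr rfl fun z _ => ?_
    exact if_congr comp_adj_same rfl rfl
  · by_cases hw : w = l k
    · rw [if_pos hw]
      rw [← Finset.add_sum_erase _ (fun m => if B.Adj k m then F ⟨k, w⟩ - F ⟨m, l m⟩ else 0)
        (Finset.mem_univ k)]
      rw [if_neg (B.loopless.irrefl k), zero_add]
      refine Finset.sum_congr rfl fun m hm => ?_
      have hkm : k ≠ m := fun h => (Finset.mem_erase.mp hm).1 h.symm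
      rw [Finset.sum_congr rfl fun z _ =>
        if_congr (comp_adj_ne hkm) (rfl : F ⟨k, w⟩ - F ⟨m, z⟩ = _) rfl]
      by_cases hbm : B.Adj k m
      · simp [hbm, hw, Finset.sum_ite_eq']
      · simp [hbm]
    · rw [if_neg hw]
      refine Finset.sum_eq_zero fun m hm => Finset.sum_eq_zero fun z _ => ?_
      have hkm : k ≠ m := fun h => (Finset.mem_erase.mp hm).1 h.symm
      rw [if_congr (comp_adj_ne hkm) (rfl : F ⟨k, w⟩ - F ⟨m, z⟩ = _) rfl]
      exact if_neg fun hq => hw hq.2.1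

lemma lap_extF_bridge_zero (i : Fin n) (f : V i → ℝ) (k : Fin n) (w : V k) :
    (if w = l k then
      ∑ m, if B.Adj k m then extF l i f ⟨k, w⟩ - extF l i f ⟨m, l m⟩ else 0 else 0) = 0 := by
  by_cases hw : w = l k
  · rw [if_pos hw]
    refine Finset.sum_eq_zero fun m _ => ?_
    rw [hw, extF_bridge, extF_bridge, sub_self, ite_self]
  · exact if_neg hw

lemma lap_extF_self (i : Fin n) (f : V i → ℝ) (w : V i) :
    (lap (composite V G l B) *ᵥ extF l i f) ⟨i, w⟩ = (lap (G i) *ᵥ f) w := by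
  rw [lap_comp_apply, lap_extF_bridge_zero, add_zero, lap_mulVec]
  refine Finset.sum_congr rfl fun z _ => ?_
  rw [extF_mk_self, extF_mk_self]

lemma lap_extF_ne {i k : Fin n} (h : k ≠ i) (f : V i → ℝ) (w : V k) :
    (lap (composite V G l B) *ᵥ extF l i f) ⟨k, w⟩ = 0 := by
  rw [lap_comp_apply, lap_extF_bridge_zero, add_zero]
  refine Finset.sum_eq_zero fun z _ => ?_
  rw [extF_mk_ne h, extF_mk_ne h, sub_self, ite_self]

lemma lap_lift (φ : Fin n → ℝ) (k : Fin n) (w : V k) :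
    (lap (composite V G l B) *ᵥ fun x => φ x.1) ⟨k, w⟩ =
      if w = l k then (lap B *ᵥ φ) k else 0 := by
  classical
  rw [lap_comp_apply]
  simp only [sub_self, ite_self, Finset.sum_const_zero, zero_add]
  by_cases hw : w = l k
  · rw [if_pos hw, if_pos hw, lap_mulVec]
  · rw [if_neg hw, if_neg hw]

lemma evec_sigma_self (i : Fin n) (u w : V i) :
    evec (α := Σ k, V k) ⟨i, u⟩ ⟨i, w⟩ = evec u w := by
  unfold evec
  by_cases h : w = u
  · rw [if_pos h, if_pos (show (⟨i, w⟩ : Σ k, V k) = ⟨i, u⟩ by rw [h])]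
  · rw [if_neg h, if_neg (show ¬(⟨i, w⟩ : Σ k, V k) = ⟨i, u⟩ from
      fun hc => h (by simpa using hc))]

lemma evec_sigma_ne {i k : Fin n} (h : k ≠ i) (u : V i) (w : V k) :
    evec (α := Σ k, V k) ⟨i, u⟩ ⟨k, w⟩ = 0 := by
  unfold evec
  rw [if_neg]
  intro hc
  exact h (congrArg Sigma.fst hc)

end Composite
section ResComposite

variable {n : ℕ} {V : Fin n → Type*} [∀ i, Fintype (V i)]
  {G : ∀ i, SimpleGraph (V i)} {l : ∀ i, V i} {B : SimpleGraph (Fin n)}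

lemma lap_extF_eq (i : Fin n) {u v : V i} {f : V i → ℝ}
    (hf : lap (G i) *ᵥ f = evec u - evec v) :
    lap (composite V G l B) *ᵥ extF l i f =
      evec (α := Σ k, V k) ⟨i, u⟩ - evec (α := Σ k, V k) ⟨i, v⟩ := by
  funext x
  rcases x with ⟨k, w⟩
  rw [Pi.sub_apply]
  by_cases h : k = i
  · subst h
    rw [lap_extF_self, hf, Pi.sub_apply, evec_sigma_self, evec_sigma_self]
  · rw [lap_extF_ne h, evec_sigma_ne h, evec_sigma_ne h, sub_zero]

lemma lap_lift_eq {i j : Fin n} (hij : i ≠ j) {φ : Fin n → ℝ}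
    (hφ : lap B *ᵥ φ = evec i - evec j) :
    (lap (composite V G l B) *ᵥ fun x => φ x.1) =
      evec (α := Σ k, V k) ⟨i, l i⟩ - evec (α := Σ k, V k) ⟨j, l j⟩ := by
  classical
  funext x
  rcases x with ⟨k, w⟩
  rw [Pi.sub_apply, lap_lift, hφ]
  by_cases hki : k = i
  · subst hki
    by_cases hw : w = l k <;>
      simp [evec, Sigma.mk.inj_iff, hij, hw, fun h : k = j => hij h]
  · by_cases hkj : k = j
    · subst hkj
      by_cases hw : w = l k <;> simp [evec, Sigma.mk.inj_iff, hki, hw]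
    · by_cases hw : w = l k <;> simp [evec, Sigma.mk.inj_iff, hki, hkj, hw]

lemma res_same (hG : ∀ i, (G i).Connected) (i : Fin n) (u v : V i) :
    resistance (composite V G l B) ⟨i, u⟩ ⟨i, v⟩ = resistance (G i) u v := by
  obtain ⟨f, hf⟩ := exists_potential (G i) (hG i) u v
  rw [resistance_eq_of_potential (G i) hf,
    resistance_eq_of_potential (composite V G l B) (lap_extF_eq (l := l) (B := B) i hf),
    extF_mk_self, extF_mk_self]

lemma res_cross (hG : ∀ i, (G i).Connected) (hB : B.Connected)
    {i j : Fin n} (hij : i ≠ j) (u : V i) (v : V j) :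
    resistance (composite V G l B) ⟨i, u⟩ ⟨j, v⟩ =
      resistance (G i) u (l i)
      + resistance (composite V G l B) ⟨i, l i⟩ ⟨j, l j⟩
      + resistance (G j) (l j) v := by
  obtain ⟨f, hf⟩ := exists_potential (G i) (hG i) u (l i)
  obtain ⟨φ, hφ⟩ := exists_potential B hB i j
  obtain ⟨g, hg⟩ := exists_potential (G j) (hG j) (l j) v
  have hef := lap_extF_eq (l := l) (B := B) i hf
  have hlift := lap_lift_eq (V := V) (G := G) (l := l) hij hφ
  have heg := lap_extF_eq (l := l) (B := B) j hg
  have hsum : lap (composite V G l B) *ᵥ (extF l i f + (fun x => φ x.1) + extF l j g)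
      = evec (α := Σ k, V k) ⟨i, u⟩ - evec (α := Σ k, V k) ⟨j, v⟩ := by
    rw [Matrix.mulVec_add, Matrix.mulVec_add, hef, hlift, heg]
    abel
  rw [resistance_eq_of_potential _ hsum,
    resistance_eq_of_potential _ hf,
    resistance_eq_of_potential _ hlift,
    resistance_eq_of_potential _ hg]
  simp only [Pi.add_apply, extF_mk_self, extF_mk_ne hij, extF_mk_ne hij.symm]
  ring

end ResComposite
section MainAux

variable {n : ℕ} {V : Fin n → Type*} [∀ i, Fintype (V i)]
  {G : ∀ i, SimpleGraph (V i)} {l : ∀ i, V i} {B : SimpleGraph (Fin n)}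

lemma sum_sigma_resistance (C : SimpleGraph (Σ i, V i)) :
    ∑ x : Σ i, V i, ∑ y : Σ i, V i, resistance C x y
      = ∑ i, ∑ j, ∑ u : V i, ∑ v : V j, resistance C ⟨i, u⟩ ⟨j, v⟩ := by
  rw [← Finset.univ_sigma_univ, Finset.sum_sigma]
  refine Finset.sum_congr rfl fun i _ => ?_
  have h1 : ∀ u : V i, ∑ y ∈ Finset.univ.sigma (fun _ => Finset.univ),
      resistance C ⟨i, u⟩ y = ∑ j, ∑ v : V j, resistance C ⟨i, u⟩ ⟨j, v⟩ :=
    fun u => Finset.sum_sigma _ _ _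
  rw [Finset.sum_congr rfl fun u _ => h1 u]
  exact Finset.sum_comm

lemma pair_erase (s : Fin n → Fin n → ℝ) :
    ∑ i, ∑ j ∈ Finset.univ.erase i, s i j
      = ∑ i, ∑ j ∈ Finset.Ioi i, (s i j + s j i) := by
  have h := Finset.sum_sum_Ioi_add_eq_sum_sum_off_diag (fun a b => s b a)
  beta_reduce at h
  rw [h]
  refine Finset.sum_congr rfl fun i _ => Finset.sum_congr ?_ fun j _ => rfl
  ext j
  simp

lemma swap_erase (t : Fin n → Fin n → ℝ) :
    ∑ i, ∑ j ∈ Finset.univ.erase i, t i j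
      = ∑ i, ∑ j ∈ Finset.univ.erase i, t j i := by
  have h1 := pair_erase t
  have h2 := pair_erase (fun a b => t b a)
  beta_reduce at h2
  rw [h1, h2]
  exact Finset.sum_congr rfl fun i _ => Finset.sum_congr rfl fun j _ => add_comm _ _

end MainAux

/-- Coherence of a composite graph in terms of the coherence of
the subgraphs, resistance distances between bridge nodes (in the composite
graph), and resistance centralities of the bridge nodes (within their own
subgraphs). -/
theorem coherence_composite
    {n : ℕ} (hn : 2 ≤ n)
    (V : Fin n → Type*) [∀ i, Fintype (V i)]
    (G : ∀ i, SimpleGraph (V i)) (l : ∀ i, V i) (B : SimpleGraph (Fin n))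
    (hG : ∀ i, (G i).Connected) (hB : B.Connected) :
    coherence (composite V G l B) =
      (1 / (2 * (Fintype.card (Σ i, V i) : ℝ))) *
        ((∑ i, 2 * (Fintype.card (V i) : ℝ) * coherence (G i)) +
         (∑ i, ∑ j ∈ Finset.Ioi i,
            (Fintype.card (V i) : ℝ) * (Fintype.card (V j) : ℝ) *
              resistance (composite V G l B) ⟨i, l i⟩ ⟨j, l j⟩) +
         (∑ i, ((Fintype.card (Σ i, V i) : ℝ) - (Fintype.card (V i) : ℝ)) *
            rcentrality (G i) (l i))) := by
  classical
  have hne : ∀ i, Nonempty (V i) := fun i => (hG i).nonempty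
  have hni0 : ∀ i, (Fintype.card (V i) : ℝ) ≠ 0 := fun i =>
    Nat.cast_ne_zero.mpr (Fintype.card_pos_iff.mpr (hne i)).ne'
  set C := composite V G l B with hC
  set N : ℝ := (Fintype.card (Σ i, V i) : ℝ) with hN
  have hNsum : N = ∑ j, (Fintype.card (V j) : ℝ) := by
    rw [hN, Fintype.card_sigma]
    push_cast
    rfl
  have hrc : ∀ i, rcentrality (G i) (l i) = ∑ u : V i, resistance (G i) u (l i) := by
    intro i
    have h := Finset.sum_filter_add_sum_filter_not Finset.univ (· ≠ l i)
      (fun u => resistance (G i) u (l i))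
    have h2 : Finset.univ.filter (fun u => ¬ u ≠ l i) = {l i} := by
      simp only [not_not]
      rw [Finset.filter_eq' Finset.univ (l i), if_pos (Finset.mem_univ _)]
    rw [h2, Finset.sum_singleton, resistance_self, add_zero] at h
    rw [rcentrality]
    exact h
  have hdiag : ∀ i, (∑ u : V i, ∑ v : V i, resistance C ⟨i, u⟩ ⟨i, v⟩)
      = 4 * (Fintype.card (V i) : ℝ) * coherence (G i) := by
    intro i
    have h1 : ∑ u : V i, ∑ v : V i, resistance C ⟨i, u⟩ ⟨i, v⟩
        = ∑ u : V i, ∑ v : V i, resistance (G i) u v :=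
      Finset.sum_congr rfl fun u _ => Finset.sum_congr rfl fun v _ => res_same hG i u v
    have h3 : coherence (G i) = ((1:ℝ)/2 * ∑ u : V i, ∑ v : V i, resistance (G i) u v)
        / (2 * (Fintype.card (V i) : ℝ)) := rfl
    rw [h1, h3]
    field_simp
    ring
  have hcross : ∀ i j, i ≠ j → (∑ u : V i, ∑ v : V j, resistance C ⟨i, u⟩ ⟨j, v⟩)
      = (Fintype.card (V j) : ℝ) * (∑ u : V i, resistance (G i) u (l i))
        + (Fintype.card (V i) : ℝ) * (Fintype.card (V j) : ℝ) * resistance C ⟨i, l i⟩ ⟨j, l j⟩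
        + (Fintype.card (V i) : ℝ) * (∑ v : V j, resistance (G j) v (l j)) := by
    intro i j hij
    have h1 : ∑ u : V i, ∑ v : V j, resistance C ⟨i, u⟩ ⟨j, v⟩
        = ∑ u : V i, ∑ v : V j, (resistance (G i) u (l i)
            + resistance C ⟨i, l i⟩ ⟨j, l j⟩ + resistance (G j) (l j) v) :=
      Finset.sum_congr rfl fun u _ => Finset.sum_congr rfl fun v _ => res_cross hG hB hij u v
    have h2 : ∀ v : V j, resistance (G j) (l j) v = resistance (G j) v (l j) :=
      fun v => resistance_comm _ _ _
    have hinner : ∀ u : V i, ∑ v : V j, (resistance (G i) u (l i)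
          + resistance C ⟨i, l i⟩ ⟨j, l j⟩ + resistance (G j) (l j) v)
        = (Fintype.card (V j) : ℝ) * (resistance (G i) u (l i)
            + resistance C ⟨i, l i⟩ ⟨j, l j⟩) + ∑ v : V j, resistance (G j) v (l j) := by
      intro u
      rw [Finset.sum_add_distrib, Finset.sum_const, Finset.card_univ, nsmul_eq_mul,
        Finset.sum_congr rfl fun v _ => h2 v]
    rw [h1, Finset.sum_congr rfl fun u _ => hinner u, Finset.sum_add_distrib,
      Finset.sum_const, Finset.card_univ, nsmul_eq_mul, ← Finset.mul_sum,
      Finset.sum_add_distrib, Finset.sum_const, Finset.card_univ, nsmul_eq_mul]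
    ring
  have hrow : ∀ i, (∑ j, ∑ u : V i, ∑ v : V j, resistance C ⟨i, u⟩ ⟨j, v⟩)
      = 4 * (Fintype.card (V i) : ℝ) * coherence (G i)
        + ∑ j ∈ Finset.univ.erase i,
            ((Fintype.card (V j) : ℝ) * (∑ u : V i, resistance (G i) u (l i))
              + (Fintype.card (V i) : ℝ) * (Fintype.card (V j) : ℝ)
                  * resistance C ⟨i, l i⟩ ⟨j, l j⟩
              + (Fintype.card (V i) : ℝ) * (∑ v : V j, resistance (G j) v (l j))) := by
    intro i
    rw [← Finset.add_sum_erase _ _ (Finset.mem_univ i), hdiag i]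
    congr 1
    refine Finset.sum_congr rfl fun j hj => ?_
    have hij : i ≠ j := by
      intro h
      subst h
      simp at hj
    exact hcross i j hij
  have hkey1 : ∑ i, ∑ j ∈ Finset.univ.erase i,
        (Fintype.card (V j) : ℝ) * (∑ u : V i, resistance (G i) u (l i))
      = ∑ i, (N - (Fintype.card (V i) : ℝ)) * (∑ u : V i, resistance (G i) u (l i)) := by
    refine Finset.sum_congr rfl fun i _ => ?_
    rw [← Finset.sum_mul]
    congr 1
    rw [Finset.sum_erase_eq_sub (Finset.mem_univ i), ← hNsum]
  have hkey2 : ∑ i, ∑ j ∈ Finset.univ.erase i,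
        (Fintype.card (V i) : ℝ) * (∑ v : V j, resistance (G j) v (l j))
      = ∑ i, (N - (Fintype.card (V i) : ℝ)) * (∑ u : V i, resistance (G i) u (l i)) := by
    exact (swap_erase (fun a b => (Fintype.card (V a) : ℝ)
      * (∑ v : V b, resistance (G b) v (l b)))).trans hkey1
  have hkey3 : ∑ i, ∑ j ∈ Finset.univ.erase i,
        (Fintype.card (V i) : ℝ) * (Fintype.card (V j) : ℝ) * resistance C ⟨i, l i⟩ ⟨j, l j⟩
      = 2 * ∑ i, ∑ j ∈ Finset.Ioi i,
          (Fintype.card (V i) : ℝ) * (Fintype.card (V j) : ℝ)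
            * resistance C ⟨i, l i⟩ ⟨j, l j⟩ := by
    have h := pair_erase (fun a b => (Fintype.card (V a) : ℝ) * (Fintype.card (V b) : ℝ)
        * resistance C ⟨a, l a⟩ ⟨b, l b⟩)
    beta_reduce at h
    rw [h, Finset.mul_sum]
    refine Finset.sum_congr rfl fun i _ => ?_
    rw [Finset.mul_sum]
    refine Finset.sum_congr rfl fun j _ => ?_
    rw [resistance_comm C ⟨j, l j⟩ ⟨i, l i⟩]
    ring
  have hsplit : ∀ i : Fin n, ∑ j ∈ Finset.univ.erase i,
        ((Fintype.card (V j) : ℝ) * (∑ u : V i, resistance (G i) u (l i))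
          + (Fintype.card (V i) : ℝ) * (Fintype.card (V j) : ℝ)
              * resistance C ⟨i, l i⟩ ⟨j, l j⟩
          + (Fintype.card (V i) : ℝ) * (∑ v : V j, resistance (G j) v (l j)))
      = (∑ j ∈ Finset.univ.erase i,
            (Fintype.card (V j) : ℝ) * (∑ u : V i, resistance (G i) u (l i)))
        + (∑ j ∈ Finset.univ.erase i,
            (Fintype.card (V i) : ℝ) * (Fintype.card (V j) : ℝ)
              * resistance C ⟨i, l i⟩ ⟨j, l j⟩)
        + (∑ j ∈ Finset.univ.erase i,
            (Fintype.card (V i) : ℝ) * (∑ v : V j, resistance (G j) v (l j))) := by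
    intro i
    rw [Finset.sum_add_distrib, Finset.sum_add_distrib]
  have e3 : ∑ i, (N - (Fintype.card (V i) : ℝ)) * rcentrality (G i) (l i)
      = ∑ i, (N - (Fintype.card (V i) : ℝ)) * (∑ u : V i, resistance (G i) u (l i)) :=
    Finset.sum_congr rfl fun i _ => by rw [hrc i]
  have e1 : (∑ i, 4 * (Fintype.card (V i) : ℝ) * coherence (G i))
      = 2 * ∑ i, 2 * (Fintype.card (V i) : ℝ) * coherence (G i) := by
    rw [Finset.mul_sum]
    exact Finset.sum_congr rfl fun i _ => by ring
  have lhs_eq : coherence C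
      = ((1:ℝ)/2 * ∑ x : Σ i, V i, ∑ y : Σ i, V i, resistance C x y) / (2 * N) := rfl
  rw [lhs_eq, sum_sigma_resistance C, Finset.sum_congr rfl fun i _ => hrow i, Finset.sum_add_distrib,
    Finset.sum_congr rfl fun i _ => hsplit i, Finset.sum_add_distrib, Finset.sum_add_distrib,
    hkey1, hkey2, hkey3, e3, e1]
  ring
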